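/- arXiv:1601.00715 — 2 statements merged into one kernel-verified Lean document; each statement's English description precedes it below -/
import Mathlib

section
/- Suppose a family of probability measures μ_ε on R^n with densities u satisfies μ_ε({x : |x| > r}) ≤ exp(−r^p/ε²) for all r > R₀, where p, R₀ > 0, and suppose moreover that u(x) < ε^{−(2n+1)} for all x and u(x) ≤ exp(−|x|^p/(2ε²)) for |x| > R₀. Then for the marginal density u_I of u on a coordinate subspace I, there exist ε₀, p', R > 0 such that u_I(x₁) < exp(−|x₁|^{p'}/(2ε²)) for |x₁| > R and all ε ∈ (0, ε₀). -/
open MeasureTheory Real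

variable {n : ℕ}

/-- Combine coordinates on `s` and on its complement into a full vector. -/
noncomputable def combine (s : Finset (Fin n)) (x : {i // i ∈ s} → ℝ)
    (y : {i // i ∈ sᶜ} → ℝ) : Fin n → ℝ := fun i =>
  if h : i ∈ s then x ⟨i, h⟩ else y ⟨i, Finset.mem_compl.mpr h⟩

/-- Marginal density of `u` on the coordinates in `s`. -/
noncomputable def marginal (u : (Fin n → ℝ) → ℝ) (s : Finset (Fin n)) :
    ({i // i ∈ s} → ℝ) → ℝ := fun x => ∫ y : {i // i ∈ sᶜ} → ℝ, u (combine s x y)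

lemma exp_neg_rpow_le_aux (k : ℕ) {p t : ℝ} (hp : 0 < p) (ht : 0 ≤ t) :
    Real.exp (-(t ^ p)) ≤ (k.factorial : ℝ) * 2 ^ (p * k) * (1 + t) ^ (-(p * (k : ℝ))) := by
  have h1t : (0:ℝ) < 1 + t := by linarith
  have hA : (0:ℝ) < (1 + t) ^ (p * (k:ℝ)) := Real.rpow_pos_of_pos h1t _
  have hKpos : (0:ℝ) < (k.factorial : ℝ) * 2 ^ (p * (k:ℝ)) := by positivity
  have hfac : (1:ℝ) ≤ (k.factorial : ℝ) := by exact_mod_cast Nat.one_le_iff_ne_zero.mpr (Nat.factorial_ne_zero k)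
  have h1 : (1 + t) ^ (p * (k:ℝ)) ≤ (k.factorial : ℝ) * 2 ^ (p * (k:ℝ)) * Real.exp (t ^ p) := by
    rcases le_total t 1 with h | h
    · have h2 : (1 + t) ^ (p * (k:ℝ)) ≤ (2:ℝ) ^ (p * (k:ℝ)) :=
        Real.rpow_le_rpow (by linarith) (by linarith) (by positivity)
      have h3 : (1:ℝ) ≤ Real.exp (t ^ p) := by
        rw [← Real.exp_zero]; exact Real.exp_le_exp.mpr (by positivity)
      nlinarith [Real.rpow_pos_of_pos (by norm_num : (0:ℝ) < 2) (p * (k:ℝ))]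
    · have h2 : (1 + t) ^ (p * (k:ℝ)) ≤ (2 * t) ^ (p * (k:ℝ)) :=
        Real.rpow_le_rpow (by linarith) (by linarith) (by positivity)
      have h3 : (2 * t) ^ (p * (k:ℝ)) = 2 ^ (p * (k:ℝ)) * (t ^ p) ^ k := by
        rw [Real.mul_rpow (by norm_num) (by linarith), Real.rpow_mul ht, Real.rpow_natCast]
      have h4 : (t ^ p) ^ k ≤ (k.factorial : ℝ) * Real.exp (t ^ p) := by
        have h5 := Real.pow_div_factorial_le_exp (x := t ^ p) (by positivity) k
        have h6 : (0:ℝ) < (k.factorial : ℝ) := by linarith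
        calc (t ^ p) ^ k = (t ^ p) ^ k / (k.factorial : ℝ) * (k.factorial : ℝ) := by field_simp
          _ ≤ Real.exp (t ^ p) * (k.factorial : ℝ) := by
              exact mul_le_mul_of_nonneg_right h5 h6.le
          _ = (k.factorial : ℝ) * Real.exp (t ^ p) := mul_comm _ _
      calc (1 + t) ^ (p * (k:ℝ)) ≤ 2 ^ (p * (k:ℝ)) * (t ^ p) ^ k := by rw [← h3]; exact h2
        _ ≤ 2 ^ (p * (k:ℝ)) * ((k.factorial : ℝ) * Real.exp (t ^ p)) := by
            exact mul_le_mul_of_nonneg_left h4 (by positivity)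
        _ = (k.factorial : ℝ) * 2 ^ (p * (k:ℝ)) * Real.exp (t ^ p) := by ring
  rw [Real.rpow_neg h1t.le, Real.exp_neg]
  rw [← div_eq_mul_inv, le_div_iff₀ hA, inv_mul_eq_div, div_le_iff₀ (Real.exp_pos _)]
  linarith [h1]


lemma integrable_exp_neg_rpow_norm {ι : Type*} [Fintype ι] {p : ℝ} (hp : 0 < p) :
    Integrable (fun y : ι → ℝ => Real.exp (-(‖y‖ ^ p))) := by
  set k : ℕ := ⌈((Fintype.card ι : ℝ) + 1) / p⌉₊ with hk
  have hcard : (Module.finrank ℝ (ι → ℝ) : ℝ) < p * k := by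
    have h1 : ((Fintype.card ι : ℝ) + 1) / p ≤ (k : ℝ) := Nat.le_ceil _
    have h2 : (Fintype.card ι : ℝ) + 1 ≤ p * k := by
      rw [div_le_iff₀ hp] at h1; linarith
    simpa [Module.finrank_fintype_fun_eq_card] using lt_of_lt_of_le (by linarith) h2
  refine ((integrable_one_add_norm (E := ι → ℝ) (μ := volume) hcard).const_mul
    ((k.factorial : ℝ) * 2 ^ (p * (k:ℝ)))).mono' ?_ (Filter.Eventually.of_forall fun y => ?_)
  · exact (Real.continuous_exp.comp ((continuous_norm.rpow_const
      (fun y => Or.inr hp.le)).neg)).aestronglyMeasurable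
  · rw [Real.norm_eq_abs, abs_of_pos (Real.exp_pos _)]
    exact exp_neg_rpow_le_aux k hp (norm_nonneg y)

lemma norm_fst_le_combine {n : ℕ} (s : Finset (Fin n)) (x : {i // i ∈ s} → ℝ)
    (y : {i // i ∈ sᶜ} → ℝ) : ‖x‖ ≤ ‖combine s x y‖ := by
  rw [pi_norm_le_iff_of_nonneg (norm_nonneg _)]
  intro j
  have : x j = combine s x y j.1 := by
    simp [combine, j.2]
  rw [this]
  exact norm_le_pi_norm (combine s x y) j.1

lemma norm_snd_le_combine {n : ℕ} (s : Finset (Fin n)) (x : {i // i ∈ s} → ℝ)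
    (y : {i // i ∈ sᶜ} → ℝ) : ‖y‖ ≤ ‖combine s x y‖ := by
  rw [pi_norm_le_iff_of_nonneg (norm_nonneg _)]
  intro j
  have hj : ¬ (j.1 ∈ s) := Finset.mem_compl.mp j.2
  have : y j = combine s x y j.1 := by
    simp [combine, hj]
  rw [this]
  exact norm_le_pi_norm (combine s x y) j.1

set_option maxHeartbeats 1000000 in
/-- **Tail bound for marginal densities.**
Suppose the densities `u ε` of a family of probability measures `μ_ε` on `ℝⁿ`
satisfy `μ_ε({|x| > r}) ≤ exp(−r^p/ε²)` for `r > R₀`, `u ε x < ε^{−(2n+1)}`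
everywhere and `u ε x ≤ exp(−|x|^p/(2ε²))` for `|x| > R₀`.  Then there are
`ε₀, p', R > 0` such that the marginal density `u_I` on a coordinate subspace
`I` satisfies `u_I(x₁) < exp(−|x₁|^{p'}/(2ε²))` for `|x₁| > R` and `ε ∈ (0,ε₀)`. -/
theorem marginal_density_tail_bound
    (p R₀ εstar : ℝ) (hp : 0 < p) (hR₀ : 0 < R₀) (hεstar : 0 < εstar)
    (u : ℝ → (Fin n → ℝ) → ℝ)
    (hmeas : ∀ ε ∈ Set.Ioo (0 : ℝ) εstar, Measurable (u ε))
    (hnonneg : ∀ ε ∈ Set.Ioo (0 : ℝ) εstar, ∀ x, 0 ≤ u ε x)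
    (hdens : ∀ ε ∈ Set.Ioo (0 : ℝ) εstar, ∫ x, u ε x = 1)
    (htail : ∀ ε ∈ Set.Ioo (0 : ℝ) εstar, ∀ r > R₀,
      ∫ x in {x : Fin n → ℝ | r < ‖x‖}, u ε x ≤ Real.exp (-(r ^ p) / ε ^ 2))
    (hbound : ∀ ε ∈ Set.Ioo (0 : ℝ) εstar, ∀ x, u ε x < ε ^ (-(2 * (n : ℤ) + 1)))
    (hptw : ∀ ε ∈ Set.Ioo (0 : ℝ) εstar, ∀ x : Fin n → ℝ, R₀ < ‖x‖ →
      u ε x ≤ Real.exp (-(‖x‖ ^ p) / (2 * ε ^ 2)))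
    (s : Finset (Fin n)) :
    ∃ ε₀ > (0 : ℝ), ∃ p' > (0 : ℝ), ∃ R > (0 : ℝ),
      ∀ ε ∈ Set.Ioo (0 : ℝ) (min ε₀ εstar), ∀ x₁ : {i // i ∈ s} → ℝ, R < ‖x₁‖ →
        marginal (u ε) s x₁ < Real.exp (-(‖x₁‖ ^ p') / (2 * ε ^ 2)) := by
  -- the integrable comparison function on the complement coordinates
  have hCint : Integrable (fun y : {i // i ∈ sᶜ} → ℝ => Real.exp (-(‖y‖ ^ p))) :=
    integrable_exp_neg_rpow_norm hp
  set C : ℝ := ∫ y : {i // i ∈ sᶜ} → ℝ, Real.exp (-(‖y‖ ^ p)) with hCdef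
  have hC0 : 0 ≤ C := integral_nonneg fun y => (Real.exp_pos _).le
  set L : ℝ := max (Real.log C) 0 + 1 with hLdef
  have hL0 : 0 < L := by positivity
  have hlogC : Real.log C < L := by
    have := le_max_left (Real.log C) 0; linarith
  set R : ℝ := R₀ + 1 + (4 : ℝ) ^ (2 / p) with hRdef
  have h4p : (0:ℝ) < (4 : ℝ) ^ (2 / p) := Real.rpow_pos_of_pos (by norm_num) _
  have hR0 : 0 < R := by positivity
  have hRpos : (0:ℝ) < R ^ p := Real.rpow_pos_of_pos hR0 _
  set ε₀ : ℝ := min (1/2) (Real.sqrt (R ^ p / (8 * L))) with hε₀def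
  have hε₀ : 0 < ε₀ := lt_min (by norm_num) (Real.sqrt_pos.mpr (by positivity))
  have hR₀R : R₀ < R := by rw [hRdef]; linarith
  have hR4 : (4:ℝ) ^ (2 / p) ≤ R := by rw [hRdef]; linarith
  refine ⟨ε₀, hε₀, p / 2, by positivity, R, hR0, ?_⟩
  intro ε hε x₁ hx₁
  have hεstar' : ε ∈ Set.Ioo (0:ℝ) εstar :=
    ⟨hε.1, lt_of_lt_of_le hε.2 (min_le_right _ _)⟩
  have hεε₀ : ε < ε₀ := lt_of_lt_of_le hε.2 (min_le_left _ _)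
  have hεpos : 0 < ε := hε.1
  have hE : 0 < ε ^ 2 := by positivity
  have hεhalf : ε ≤ 1/2 := le_of_lt (lt_of_lt_of_le hεε₀ (min_le_left _ _))
  have h4E : 4 * ε ^ 2 ≤ 1 := by nlinarith
  set r : ℝ := ‖x₁‖ with hrdef
  have hr : R < r := hx₁
  have hr0 : 0 < r := lt_trans hR0 hr
  -- pointwise bound
  have stepA : ∀ y : {i // i ∈ sᶜ} → ℝ,
      u ε (combine s x₁ y) ≤ Real.exp (-(r ^ p) / (4 * ε ^ 2)) * Real.exp (-(‖y‖ ^ p)) := by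
    intro y
    have hc1 : r ≤ ‖combine s x₁ y‖ := norm_fst_le_combine s x₁ y
    have hc2 : ‖y‖ ≤ ‖combine s x₁ y‖ := norm_snd_le_combine s x₁ y
    have hcR₀ : R₀ < ‖combine s x₁ y‖ := by linarith
    have hub := hptw ε hεstar' (combine s x₁ y) hcR₀
    have hcpos : 0 < ‖combine s x₁ y‖ := by linarith
    have hrp : r ^ p ≤ ‖combine s x₁ y‖ ^ p := Real.rpow_le_rpow hr0.le hc1 hp.le
    have hyp : ‖y‖ ^ p ≤ ‖combine s x₁ y‖ ^ p :=
      Real.rpow_le_rpow (norm_nonneg _) hc2 hp.le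
    have hy0 : (0:ℝ) ≤ ‖y‖ ^ p := Real.rpow_nonneg (norm_nonneg _) _
    have hr0' : (0:ℝ) ≤ r ^ p := Real.rpow_nonneg hr0.le _
    have key : -(‖combine s x₁ y‖ ^ p) / (2 * ε ^ 2) ≤
        -(r ^ p) / (4 * ε ^ 2) + -(‖y‖ ^ p) := by
      have e1 : -(‖combine s x₁ y‖ ^ p) / (2 * ε ^ 2) ≤
          (-(r ^ p) - ‖y‖ ^ p) / (4 * ε ^ 2) := by
        rw [div_le_div_iff₀ (by positivity) (by positivity)]
        have h2A : r ^ p + ‖y‖ ^ p ≤ 2 * ‖combine s x₁ y‖ ^ p := by linarith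
        nlinarith [mul_le_mul_of_nonneg_right h2A hE.le]
      have e2 : (-(r ^ p) - ‖y‖ ^ p) / (4 * ε ^ 2) =
          -(r ^ p) / (4 * ε ^ 2) + -(‖y‖ ^ p) / (4 * ε ^ 2) := by ring
      have e3 : -(‖y‖ ^ p) / (4 * ε ^ 2) ≤ -(‖y‖ ^ p) := by
        rw [div_le_iff₀ (by positivity)]
        nlinarith [mul_nonneg hy0 (by linarith : (0:ℝ) ≤ 1 - 4 * ε ^ 2)]
      linarith
    calc u ε (combine s x₁ y) ≤ Real.exp (-(‖combine s x₁ y‖ ^ p) / (2 * ε ^ 2)) := hub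
      _ ≤ Real.exp (-(r ^ p) / (4 * ε ^ 2) + -(‖y‖ ^ p)) := Real.exp_le_exp.mpr key
      _ = Real.exp (-(r ^ p) / (4 * ε ^ 2)) * Real.exp (-(‖y‖ ^ p)) := Real.exp_add _ _
  -- integrate the bound
  have stepB : marginal (u ε) s x₁ ≤ Real.exp (-(r ^ p) / (4 * ε ^ 2)) * C := by
    have hint : Integrable (fun y : {i // i ∈ sᶜ} → ℝ =>
        Real.exp (-(r ^ p) / (4 * ε ^ 2)) * Real.exp (-(‖y‖ ^ p))) := hCint.const_mul _
    have := integral_mono_of_nonneg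
      (f := fun y : {i // i ∈ sᶜ} → ℝ => u ε (combine s x₁ y))
      (g := fun y : {i // i ∈ sᶜ} → ℝ =>
        Real.exp (-(r ^ p) / (4 * ε ^ 2)) * Real.exp (-(‖y‖ ^ p)))
      (Filter.Eventually.of_forall fun y => hnonneg ε hεstar' _)
      hint (Filter.Eventually.of_forall stepA)
    rw [integral_const_mul] at this
    exact this
  -- the constant beats the remaining exponential gap
  have hrp2 : (4:ℝ) ≤ r ^ (p / 2) := by
    have h1 : (4:ℝ) ^ (2 / p) ≤ r := le_trans hR4 hr.le
    have h2 : ((4:ℝ) ^ (2 / p)) ^ (p / 2) ≤ r ^ (p / 2) :=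
      Real.rpow_le_rpow (by positivity) h1 (by positivity)
    have h3 : ((4:ℝ) ^ (2 / p)) ^ (p / 2) = (4:ℝ) := by
      rw [← Real.rpow_mul (by norm_num : (0:ℝ) ≤ 4)]
      rw [show (2 / p) * (p / 2) = 1 by field_simp]
      exact Real.rpow_one 4
    linarith [h3 ▸ h2]
  have hsq : r ^ p = (r ^ (p / 2)) ^ (2:ℕ) := by
    rw [← Real.rpow_natCast (r ^ (p/2)) 2, ← Real.rpow_mul hr0.le]
    norm_num
  have hgap : r ^ p / (8 * ε ^ 2) ≤ r ^ p / (4 * ε ^ 2) - r ^ (p / 2) / (2 * ε ^ 2) := by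
    have ht0 : (0:ℝ) ≤ r ^ (p/2) := Real.rpow_nonneg hr0.le _
    have h1 : 4 * (r ^ (p/2)) ≤ r ^ p := by
      rw [hsq]
      nlinarith [mul_nonneg ht0 (by linarith : (0:ℝ) ≤ r ^ (p/2) - 4)]
    have heq : r ^ p / (4 * ε ^ 2) - r ^ (p / 2) / (2 * ε ^ 2) =
        (r ^ p - 2 * r ^ (p / 2)) / (4 * ε ^ 2) := by ring
    rw [heq, div_le_div_iff₀ (by positivity) (by positivity)]
    nlinarith [mul_nonneg (by linarith : (0:ℝ) ≤ r ^ p - 4 * r ^ (p/2)) hE.le]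
  have hRr : R ^ p ≤ r ^ p := Real.rpow_le_rpow hR0.le hr.le hp.le
  have hLlt : L < R ^ p / (8 * ε ^ 2) := by
    have hsqrt : ε < Real.sqrt (R ^ p / (8 * L)) :=
      lt_of_lt_of_le hεε₀ (min_le_right _ _)
    have h2 : ε ^ 2 < R ^ p / (8 * L) := by
      have hs2 : Real.sqrt (R ^ p / (8 * L)) ^ 2 = R ^ p / (8 * L) :=
        Real.sq_sqrt (by positivity)
      calc ε ^ 2 < Real.sqrt (R ^ p / (8 * L)) ^ 2 :=
            pow_lt_pow_left₀ hsqrt hεpos.le (by norm_num)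
        _ = R ^ p / (8 * L) := hs2
    rw [lt_div_iff₀ (by positivity)]
    rw [lt_div_iff₀ (by positivity)] at h2
    have hcomm : L * (8 * ε ^ 2) = ε ^ 2 * (8 * L) := by ring
    linarith
  have hCexp : C < Real.exp (r ^ p / (4 * ε ^ 2) - r ^ (p / 2) / (2 * ε ^ 2)) := by
    calc C ≤ Real.exp (Real.log C) := Real.le_exp_log C
      _ < Real.exp (r ^ p / (4 * ε ^ 2) - r ^ (p / 2) / (2 * ε ^ 2)) := by
          apply Real.exp_lt_exp.mpr
          have h8 : R ^ p / (8 * ε ^ 2) ≤ r ^ p / (8 * ε ^ 2) := by gcongr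
          linarith
  have final : Real.exp (-(r ^ p) / (4 * ε ^ 2)) * C <
      Real.exp (-(r ^ (p / 2)) / (2 * ε ^ 2)) := by
    have h := mul_lt_mul_of_pos_left hCexp (Real.exp_pos (-(r ^ p) / (4 * ε ^ 2)))
    have heq : -(r ^ p) / (4 * ε ^ 2) +
        (r ^ p / (4 * ε ^ 2) - r ^ (p / 2) / (2 * ε ^ 2)) =
        -(r ^ (p / 2)) / (2 * ε ^ 2) := by ring
    rw [← Real.exp_add, heq] at h
    exact h
  exact lt_of_le_of_lt stepB final
end

section
/- Suppose p : R^n → R is continuous with p = 1 on a compact set A, 0 < p ≤ 1 everywhere, and p(x) ≥ 1 − M·dist²(x,A) on a neighborhood N of A for some M > 0. If a probability measure μ satisfies ∫ dist²(x,A) dμ ≤ V ε², then ∫ p dμ ≥ 1 − C ε² where C = V·M + V/d² and d = inf_{x ∈ ∂N} dist(x, A) > 0. -/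
open MeasureTheory Real Set

/-- A preconnected set meeting both a set and its complement meets the frontier. -/
lemma aux_inter_frontier {X : Type*} [TopologicalSpace X] {s N : Set X}
    (hs : IsPreconnected s) (hN : IsOpen N)
    (h1 : (s ∩ N).Nonempty) (h2 : (s \ N).Nonempty) :
    (s ∩ frontier N).Nonempty := by
  by_contra h
  rw [Set.not_nonempty_iff_eq_empty] at h
  have hmem : ∀ x ∈ s, x ∉ frontier N :=
    fun x hx hxf => (Set.eq_empty_iff_forall_notMem.1 h x) ⟨hx, hxf⟩
  have key : ∀ x ∈ s, x ∈ closure N → x ∈ interior N := by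
    intro x hx hxc
    by_contra h'
    exact hmem x hx ⟨hxc, h'⟩
  have hsub : s ⊆ interior N ∪ (closure N)ᶜ := by
    intro x hx
    by_cases hxc : x ∈ closure N
    · exact Or.inl (key x hx hxc)
    · exact Or.inr hxc
  have hu : (s ∩ interior N).Nonempty := by
    obtain ⟨x, hxs, hxN⟩ := h1
    exact ⟨x, hxs, by rwa [hN.interior_eq]⟩
  have hv : (s ∩ (closure N)ᶜ).Nonempty := by
    obtain ⟨x, hxs, hxN⟩ := h2
    exact ⟨x, hxs, fun hxc => hxN (interior_subset (key x hxs hxc))⟩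
  obtain ⟨x, hxs, hx1, hx2⟩ := hs (interior N) (closure N)ᶜ isOpen_interior
    isClosed_closure.isOpen_compl hsub hu hv
  exact hx2 (subset_closure (interior_subset hx1))

/-- **Lower bound on the functional robustness.**
Suppose `p : ℝⁿ → ℝ` is continuous with `p = 1` on a compact set `A`,
`0 < p ≤ 1` everywhere, and `p(x) ≥ 1 − M·dist²(x,A)` on an open neighborhood
`N` of `A` for some `M > 0`.  If a probability measure `μ` satisfies
`∫ dist²(x,A) dμ ≤ V ε²`, then `∫ p dμ ≥ 1 − C ε²` with `C = V·M + V/d²`,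
where `d = inf_{x ∈ ∂N} dist(x,A) > 0`. -/
theorem functional_robustness_lower_bound
    {n : ℕ} (p : (EuclideanSpace ℝ (Fin n)) → ℝ)
    (A N : Set (EuclideanSpace ℝ (Fin n)))
    (hA : IsCompact A) (hAne : A.Nonempty)
    (hN : IsOpen N) (hAN : A ⊆ N)
    (hp : Continuous p)
    (hpA : ∀ x ∈ A, p x = 1)
    (hp01 : ∀ x, 0 < p x ∧ p x ≤ 1)
    (M : ℝ) (hM : 0 < M)
    (hpN : ∀ x ∈ N, 1 - M * Metric.infDist x A ^ 2 ≤ p x)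
    (d : ℝ) (hd : d = ⨅ x : frontier N, Metric.infDist (x : EuclideanSpace ℝ (Fin n)) A)
    (hd0 : 0 < d)
    (μ : Measure (EuclideanSpace ℝ (Fin n))) [IsProbabilityMeasure μ]
    (V ε : ℝ) (hV : 0 < V) (hε : 0 < ε)
    (hintdist : Integrable (fun x => Metric.infDist x A ^ 2) μ)
    (hmoment : ∫ x, Metric.infDist x A ^ 2 ∂μ ≤ V * ε ^ 2) :
    1 - (V * M + V / d ^ 2) * ε ^ 2 ≤ ∫ x, p x ∂μ := by
  obtain ⟨c, hc⟩ : ∃ c : ℝ, c = M + 1 / d ^ 2 := ⟨_, rfl⟩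
  have hc0 : 0 < c := by rw [hc]; positivity
  -- Step 1: for x ∉ N, infDist x A ≥ d
  have hout : ∀ x, x ∉ N → d ≤ Metric.infDist x A := by
    intro x hx
    by_contra hlt
    push_neg at hlt
    obtain ⟨a, haA, hax⟩ := (Metric.infDist_lt_iff hAne).1 hlt
    -- segment from a to x meets the frontier of N
    obtain ⟨y, hyseg, hyf⟩ := aux_inter_frontier
      ((convex_segment a x).isPreconnected) hN
      ⟨a, left_mem_segment ℝ a x, hAN haA⟩
      ⟨x, right_mem_segment ℝ a x, hx⟩
    have h1 : d ≤ Metric.infDist y A := by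
      rw [hd]
      exact ciInf_le ⟨0, fun r ⟨z, hz⟩ => hz ▸ Metric.infDist_nonneg⟩ (⟨y, hyf⟩ : frontier N)
    have h2 : Metric.infDist y A ≤ dist y a := Metric.infDist_le_dist_of_mem haA
    have h3 : dist a y ≤ dist a x := by
      have := dist_add_dist_of_mem_segment hyseg
      nlinarith [dist_nonneg (x := y) (y := x)]
    rw [dist_comm] at h2
    rw [dist_comm a x] at h3
    linarith
  -- Step 2: pointwise bound
  have hpt : ∀ x, 1 - c * Metric.infDist x A ^ 2 ≤ p x := by
    intro x
    by_cases hx : x ∈ N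
    · have h1 := hpN x hx
      have h2 : 0 ≤ (1 / d ^ 2) * Metric.infDist x A ^ 2 := by positivity
      have : c * Metric.infDist x A ^ 2
          = M * Metric.infDist x A ^ 2 + (1 / d ^ 2) * Metric.infDist x A ^ 2 := by
        rw [hc]; ring
      linarith
    · have h1 := hout x hx
      have h2 : d ^ 2 ≤ Metric.infDist x A ^ 2 := by nlinarith
      have h3 : 1 ≤ (1 / d ^ 2) * Metric.infDist x A ^ 2 := by
        rw [div_mul_eq_mul_div, one_mul, le_div_iff₀ (by positivity)]
        linarith
      have h4 : 0 ≤ M * Metric.infDist x A ^ 2 := by positivity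
      have h5 : 0 < p x := (hp01 x).1
      have : c * Metric.infDist x A ^ 2
          = M * Metric.infDist x A ^ 2 + (1 / d ^ 2) * Metric.infDist x A ^ 2 := by
        rw [hc]; ring
      linarith
  -- Step 3: integrate
  have hintp : Integrable p μ := by
    refine Integrable.mono' (integrable_const 1) hp.aestronglyMeasurable
      (ae_of_all _ fun x => ?_)
    rw [Real.norm_eq_abs, abs_le]
    exact ⟨by linarith [(hp01 x).1], (hp01 x).2⟩
  have hintlhs : Integrable (fun x => 1 - c * Metric.infDist x A ^ 2) μ :=
    (integrable_const 1).sub (hintdist.const_mul c)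
  have hmono : ∫ x, (1 - c * Metric.infDist x A ^ 2) ∂μ ≤ ∫ x, p x ∂μ :=
    integral_mono hintlhs hintp fun x => hpt x
  have hval : ∫ x, (1 - c * Metric.infDist x A ^ 2) ∂μ
      = 1 - c * ∫ x, Metric.infDist x A ^ 2 ∂μ := by
    rw [integral_sub (integrable_const 1) (hintdist.const_mul c),
      integral_const, integral_const_mul]
    simp
  have hfin : 1 - (V * M + V / d ^ 2) * ε ^ 2 ≤ 1 - c * ∫ x, Metric.infDist x A ^ 2 ∂μ := by
    have h1 : c * ∫ x, Metric.infDist x A ^ 2 ∂μ ≤ c * (V * ε ^ 2) :=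
      mul_le_mul_of_nonneg_left hmoment hc0.le
    have h2 : c * (V * ε ^ 2) = (V * M + V / d ^ 2) * ε ^ 2 := by
      rw [hc]; field_simp
    linarith
  linarith [hval ▸ hmono]
end
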